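/- arXiv:2010.03862 — 2 statements merged into one kernel-verified Lean document; each statement's English description precedes it below -/
import Mathlib

section
/- The linear confluent Vandermonde system ∑_{j=1}^s ∑_{k=0}^{m_j-1} x_{j,k}·C(r,k)·αⱼ^{r-k} = u_r (r = 0,…,n-1) has the unique solution x_{j,k} = ∑_{i=0}^{n-1} (u_i/i!)·L_{j,k}^{(i)}(0), where L_{j,k} are the generalized Hermite interpolation polynomials for P(x)=∏ⱼ(x-αⱼ)^{mⱼ}. -/
open Polynomial Finset

lemma key_eval {F : Type*} [Field F] {n : ℕ} (p : F[X]) (hp : p.natDegree < n)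
    (k : ℕ) (a : F) :
    (Polynomial.derivative^[k] p).eval a =
      ∑ i ∈ range n, (k.factorial : F) * ((i.choose k : ℕ) : F) * p.coeff i * a ^ (i - k) := by
  have hdk : (Polynomial.derivative^[k] p).natDegree < n :=
    lt_of_le_of_lt (le_trans (p.natDegree_iterate_derivative k) (Nat.sub_le _ _)) hp
  rw [Polynomial.eval_eq_sum_range' hdk]
  have hL : ∀ r ∈ range n, r ∉ range (n - k) →
      (Polynomial.derivative^[k] p).coeff r * a ^ r = 0 := by
    intro r hr' hr
    rw [mem_range, not_lt] at hr
    have hc : p.coeff (r + k) = 0 := coeff_eq_zero_of_natDegree_lt (by omega)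
    rw [coeff_iterate_derivative, hc, smul_zero, zero_mul]
  have hR : ∀ i ∈ range n, i ∉ Finset.Ico k n →
      (k.factorial : F) * ((i.choose k : ℕ) : F) * p.coeff i * a ^ (i - k) = 0 := by
    intro i hi hni
    rw [mem_range] at hi
    rw [Finset.mem_Ico, not_and, not_lt] at hni
    have hik : i < k := by by_contra h; exact absurd hi (not_lt.2 (hni (not_lt.1 h)))
    rw [Nat.choose_eq_zero_of_lt hik]
    simp
  rw [← Finset.sum_subset (Finset.range_subset_range.2 (Nat.sub_le n k)) hL,
      ← Finset.sum_subset (by rw [Finset.range_eq_Ico]; exact Finset.Ico_subset_Ico (Nat.zero_le k) le_rfl) hR]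
  rw [Finset.sum_Ico_eq_sum_range]
  rcases le_or_gt k n with h | h
  · have hnk : n - k + k = n := Nat.sub_add_cancel h
    apply Finset.sum_congr rfl
    intro r hr
    rw [coeff_iterate_derivative]
    simp only [Nat.add_comm k r, Nat.add_sub_cancel,
      Nat.descFactorial_eq_factorial_mul_choose, nsmul_eq_mul]
    push_cast
    ring
  · have h1 : n - k = 0 := Nat.sub_eq_zero_of_le h.le
    simp [h1]

/-- The linear confluent Vandermonde system
`∑_j ∑_{k<m_j} x_{j,k} C(r,k) αⱼ^{r-k} = u_r` (`r = 0,…,n-1`) has the unique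
solution `x_{j,k} = ∑_{i<n} (u_i/i!) L_{j,k}^{(i)}(0)`. -/
theorem stmt9 {F : Type*} [Field F] [CharZero F] (s : ℕ) (α : Fin s → F)
    (hα : Function.Injective α) (m : Fin s → ℕ) (hm : ∀ j, 0 < m j)
    (n : ℕ) (hn : ∑ j, m j = n)
    (L : (j : Fin s) → Fin (m j) → F[X])
    (hdeg : ∀ (j : Fin s) (k : Fin (m j)), (L j k).degree < n)
    (hL : ∀ (i j : Fin s) (k : Fin (m j)) (l : Fin (m i)),
      (Polynomial.derivative^[(l : ℕ)] (L j k)).eval (α i) =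
        if i = j ∧ (l : ℕ) = (k : ℕ) then ((l : ℕ).factorial : F) else 0)
    (u : Fin n → F) :
    ∀ x : ((j : Fin s) × Fin (m j)) → F,
      (∀ r : Fin n, ∑ p : (j : Fin s) × Fin (m j),
          x p * (((r : ℕ).choose (p.2 : ℕ) : F) * α p.1 ^ ((r : ℕ) - (p.2 : ℕ))) = u r) ↔
      (∀ p : (j : Fin s) × Fin (m j),
          x p = ∑ i : Fin n,
            u i / ((i : ℕ).factorial : F) *
              (Polynomial.derivative^[(i : ℕ)] (L p.1 p.2)).eval 0) := by
  intro x
  -- empty case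
  rcases Nat.eq_zero_or_pos n with hn0 | hn0
  · subst hn0
    have hemp : IsEmpty ((j : Fin s) × Fin (m j)) := by
      constructor
      rintro ⟨j, k⟩
      have h1 : m j ≤ ∑ j, m j := Finset.single_le_sum (fun i _ => Nat.zero_le _) (mem_univ j)
      have h2 := hm j
      omega
    constructor
    · intro _ p; exact hemp.elim p
    · intro _ r; exact r.elim0
  -- nonempty case
  have hnd : ∀ (j : Fin s) (k : Fin (m j)), (L j k).natDegree < n := by
    intro j k
    rcases eq_or_ne (L j k) 0 with h | h
    · simpa [h] using hn0
    · exact (Polynomial.natDegree_lt_iff_degree_lt h).2 (hdeg j k)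
  let M : Matrix (Fin n) ((j : Fin s) × Fin (m j)) F := fun r p => ((r : ℕ).choose (p.2 : ℕ) : F) * α p.1 ^ ((r : ℕ) - (p.2 : ℕ))
  let N : Matrix ((j : Fin s) × Fin (m j)) (Fin n) F := fun p i => (L p.1 p.2).coeff i
  have hfac : ∀ k : ℕ, ((k.factorial : F)) ≠ 0 := fun k =>
    Nat.cast_ne_zero.mpr k.factorial_ne_zero
  have hNM : N * M = 1 := by
    ext p q
    have hkey := key_eval (n := n) (L p.1 p.2) (hnd p.1 p.2) (q.2 : ℕ) (α q.1)
    rw [hL q.1 p.1 p.2 q.2] at hkey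
    have hsum : ∑ i ∈ range n, ((q.2 : ℕ).factorial : F) * (((i.choose (q.2 : ℕ) : ℕ)) : F) *
          (L p.1 p.2).coeff i * α q.1 ^ (i - (q.2 : ℕ)) =
        ((q.2 : ℕ).factorial : F) * ∑ i ∈ range n,
          (L p.1 p.2).coeff i * ((i.choose (q.2 : ℕ) : ℕ) : F) * α q.1 ^ (i - (q.2 : ℕ)) := by
      rw [Finset.mul_sum]; exact Finset.sum_congr rfl fun i _ => by ring
    rw [hsum] at hkey
    have hiff : (q.1 = p.1 ∧ (q.2 : ℕ) = (p.2 : ℕ)) ↔ p = q := by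
      constructor
      · rintro ⟨h1, h2⟩
        obtain ⟨pj, pk⟩ := p
        obtain ⟨qj, qk⟩ := q
        simp only at h1 h2
        subst h1
        exact congrArg _ (Fin.ext h2.symm)
      · rintro rfl; exact ⟨rfl, rfl⟩
    rw [Matrix.mul_apply]
    have hsum2 : ∑ r : Fin n, N p r * M r q =
        ∑ i ∈ range n, (L p.1 p.2).coeff i * ((i.choose (q.2 : ℕ) : ℕ) : F) *
          α q.1 ^ (i - (q.2 : ℕ)) := by
      rw [← Fin.sum_univ_eq_sum_range (fun i => (L p.1 p.2).coeff i *
        ((i.choose (q.2 : ℕ) : ℕ) : F) * α q.1 ^ (i - (q.2 : ℕ)))]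
      exact Finset.sum_congr rfl fun r _ => by simp [M, N]; ring
    rw [hsum2]
    set S := ∑ i ∈ range n, (L p.1 p.2).coeff i * ((i.choose (q.2 : ℕ) : ℕ) : F) *
          α q.1 ^ (i - (q.2 : ℕ)) with hS
    rcases eq_or_ne p q with h | h
    · have h1 : (((q.2 : ℕ)).factorial : F) * S = (((q.2 : ℕ)).factorial : F) * 1 := by
        rw [mul_one, ← hkey, if_pos (hiff.2 h)]
      rw [mul_left_cancel₀ (hfac _) h1, h, Matrix.one_apply_eq]
    · have h1 : (((q.2 : ℕ)).factorial : F) * S = (((q.2 : ℕ)).factorial : F) * 0 := by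
        rw [mul_zero, ← hkey, if_neg (fun hc => h (hiff.1 hc))]
      rw [mul_left_cancel₀ (hfac _) h1, Matrix.one_apply_ne h]
  have e : Fin n ≃ ((j : Fin s) × Fin (m j)) := Fintype.equivOfCardEq (by simpa [Fintype.card_sigma] using hn.symm)
  have hMN : M * N = 1 := (Matrix.mul_eq_one_comm_of_equiv e).2 hNM
  have hform : ∀ p : (j : Fin s) × Fin (m j), (∑ i : Fin n, u i / ((i : ℕ).factorial : F) *
      (Polynomial.derivative^[(i : ℕ)] (L p.1 p.2)).eval 0) = (N.mulVec u) p := by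
    intro p
    simp only [Matrix.mulVec, dotProduct]
    apply Finset.sum_congr rfl
    intro i _
    have heval : (Polynomial.derivative^[(i : ℕ)] (L p.1 p.2)).eval 0 =
        (((i : ℕ)).factorial : F) * (L p.1 p.2).coeff i := by
      rw [← Polynomial.coeff_zero_eq_eval_zero, Polynomial.coeff_iterate_derivative]
      simp [Nat.descFactorial_self, nsmul_eq_mul]
    rw [heval]
    have hf := hfac (i : ℕ)
    field_simp [N]
    ring
  have hMrow : ∀ r : Fin n, (M.mulVec x) r = ∑ p : (j : Fin s) × Fin (m j),
      x p * (((r : ℕ).choose (p.2 : ℕ) : F) * α p.1 ^ ((r : ℕ) - (p.2 : ℕ))) := by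
    intro r
    simp only [Matrix.mulVec, dotProduct]
    exact Finset.sum_congr rfl fun p _ => mul_comm _ _
  have hx1 : (∀ r : Fin n, ∑ p : (j : Fin s) × Fin (m j),
      x p * (((r : ℕ).choose (p.2 : ℕ) : F) * α p.1 ^ ((r : ℕ) - (p.2 : ℕ))) = u r) ↔
      M.mulVec x = u := by
    constructor
    · intro h; funext r; rw [hMrow r, h r]
    · intro h r; rw [← hMrow r, h]
  have hx2 : (∀ p : (j : Fin s) × Fin (m j), x p = ∑ i : Fin n, u i / ((i : ℕ).factorial : F) *
      (Polynomial.derivative^[(i : ℕ)] (L p.1 p.2)).eval 0) ↔ x = N.mulVec u := by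
    constructor
    · intro h; funext p; rw [h p, hform p]
    · intro h p; rw [congrFun h p, ← hform p]
  rw [hx1, hx2]
  constructor
  · intro h; rw [← h, Matrix.mulVec_mulVec, hNM, Matrix.one_mulVec]
  · intro h; rw [h, Matrix.mulVec_mulVec, hMN, Matrix.one_mulVec]
end

section
/- Let P(x) = (x-α₁)^{m₁}(x-α₂)^{m₂} with α₁ ≠ α₂. Then for 0 ≤ k₁ ≤ m₁-1, the Hermite interpolation polynomial L_{1,k₁}(x) equals ∑_{i=0}^{m₁-k₁-1} (-1)^i·C(m₂+i-1, m₂-1)/(α₁-α₂)^{m₂+i} · (x-α₁)^{i+k₁}·(x-α₂)^{m₂}, and symmetrically L_{2,k₂}(x) = ∑_{i=0}^{m₂-k₂-1} (-1)^i·C(m₁+i-1, m₁-1)/(α₂-α₁)^{m₁+i} · (x-α₁)^{m₁}·(x-α₂)^{i+k₂}. -/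
/-!
Write `R` for the claimed right-hand side of `L_{1,k}`. Both `L_{1,k}` and `R` have degree `< n`,
and `(x - α₂)^{m₂}` visibly divides `R`, so it suffices that `R ≡ (x - α₁)^k` modulo
`(x - α₁)^{m₁}`; the coprime factors `(x - α₁)^{m₁}` and `(x - α₂)^{m₂}` then both divide
`L_{1,k} - R`. After dividing by `(x - α₁)^k`, this congruence says that the sum is the truncation
at order `m₁ - k` of the expansion of `(x - α₂)^{-m₂} = ((x - α₁) + (α₁ - α₂))^{-m₂}` in powers of
`x - α₁`, whose coefficients come from the negative binomial series `(1 - y)^{-m}`.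
-/

open Polynomial Finset

theorem Polynomial.X_pow_dvd_trunc_mul_sub_one {R : Type*} [CommRing R] {f : PowerSeries R}
    {p : R[X]} (hfp : f * (p : PowerSeries R) = 1) (M : ℕ) :
    (X : R[X]) ^ M ∣ PowerSeries.trunc M f * p - 1 := by
  have hcoe : ((PowerSeries.trunc M f * p - 1 : R[X]) : PowerSeries R) =
      -(PowerSeries.X ^ M *
        ((PowerSeries.mk fun i ↦ PowerSeries.coeff (i + M) f) * (p : PowerSeries R))) := by
    push_cast
    linear_combination hfp - (p : PowerSeries R) * PowerSeries.eq_X_pow_mul_shift_add_trunc M f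
  rw [X_pow_dvd_iff]
  intro d hd
  rw [← coeff_coe, hcoe, map_neg, PowerSeries.coeff_X_pow_mul', if_neg (by omega), neg_zero]

theorem X_sub_C_pow_dvd_of_iterate_derivative_eval_eq_zero {R : Type*} [CommRing R] [IsDomain R]
    [CharZero R] {p : R[X]} {t : R} {m : ℕ} (h : ∀ l < m, (derivative^[l] p).eval t = 0) :
    (X - C t) ^ m ∣ p := by
  rcases eq_or_ne p 0 with rfl | hp
  · exact dvd_zero _
  cases m with
  | zero => simp
  | succ n =>
    rw [← le_rootMultiplicity_iff hp, Nat.succ_le_iff,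
      lt_rootMultiplicity_iff_isRoot_iterate_derivative hp]
    exact fun l hl ↦ h l (Nat.lt_succ_of_le hl)

theorem eval_iterate_derivative_X_sub_C_pow_self {R : Type*} [CommRing R] (t : R) (k l : ℕ) :
    (derivative^[l] ((X - C t) ^ k)).eval t = if l = k then (l.factorial : R) else 0 := by
  rw [iterate_derivative_X_sub_pow, nsmul_eq_mul, eval_mul, eval_natCast, eval_pow, eval_sub,
    eval_X, eval_C, sub_self]
  rcases lt_trichotomy l k with h | rfl | h
  · rw [zero_pow (by omega), mul_zero, if_neg h.ne]
  · rw [Nat.sub_self, pow_zero, mul_one, if_pos rfl, Nat.descFactorial_self]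
  · rw [if_neg h.ne', Nat.descFactorial_eq_zero_iff_lt.mpr h, Nat.cast_zero, zero_mul]

section

variable {F : Type*} [Field F]

def hermiteCoeff (m : ℕ) (β : F) (i : ℕ) : F :=
  (-1) ^ i * ((m + i - 1).choose (m - 1) : F) / β ^ (m + i)

theorem mk_hermiteCoeff_mul_X_add_C_pow {m : ℕ} (hm : 0 < m) {β : F} (hβ : β ≠ 0) :
    PowerSeries.mk (hermiteCoeff m β) * (PowerSeries.X + PowerSeries.C β) ^ m = 1 := by
  set c : F := -β⁻¹
  have hinv : PowerSeries.rescale c (PowerSeries.mk fun i ↦ ((m - 1 + i).choose (m - 1) : F)) *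
      (1 - PowerSeries.C c * PowerSeries.X) ^ m = 1 := by
    rw [← PowerSeries.invOneSubPow_val_eq_mk_sub_one_add_choose_of_pos F m hm,
      ← PowerSeries.rescale_X, ← map_one (PowerSeries.rescale c), ← map_sub, ← map_pow,
      ← map_mul, ← PowerSeries.invOneSubPow_inv_eq_one_sub_pow, Units.val_inv, map_one]
  have hfac : PowerSeries.X + PowerSeries.C β =
      PowerSeries.C β * (1 - PowerSeries.C c * PowerSeries.X) := by
    rw [mul_sub, mul_one, ← mul_assoc, ← map_mul, mul_neg, mul_inv_cancel₀ hβ]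
    simp only [map_neg, map_one, neg_one_mul, sub_neg_eq_add, add_comm]
  have hmk : PowerSeries.mk (hermiteCoeff m β) = PowerSeries.C (β⁻¹ ^ m) *
      PowerSeries.rescale c (PowerSeries.mk fun i ↦ ((m - 1 + i).choose (m - 1) : F)) := by
    ext i
    rw [PowerSeries.coeff_C_mul, PowerSeries.coeff_rescale, PowerSeries.coeff_mk,
      PowerSeries.coeff_mk, hermiteCoeff, Nat.sub_add_comm hm, div_eq_mul_inv, ← inv_pow,
      pow_add, neg_pow]
    ring
  calc PowerSeries.mk (hermiteCoeff m β) * (PowerSeries.X + PowerSeries.C β) ^ m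
      = PowerSeries.C ((β⁻¹ * β) ^ m) * (PowerSeries.rescale c
          (PowerSeries.mk fun i ↦ ((m - 1 + i).choose (m - 1) : F)) *
          (1 - PowerSeries.C c * PowerSeries.X) ^ m) := by
        rw [hmk, hfac, mul_pow, mul_pow, map_mul, map_pow, map_pow]; ring
    _ = 1 := by rw [hinv, inv_mul_cancel₀ hβ, one_pow, map_one, one_mul]

theorem X_sub_C_pow_dvd_sum_hermiteCoeff_mul_sub_one {m : ℕ} (hm : 0 < m) {α γ : F}
    (hαγ : α ≠ γ) (M : ℕ) :
    (X - C α) ^ M ∣ (∑ i ∈ range M, C (hermiteCoeff m (α - γ) i) * (X - C α) ^ i) *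
      (X - C γ) ^ m - 1 := by
  have h := _root_.map_dvd (aeval (X - C α))
    (X_pow_dvd_trunc_mul_sub_one (f := PowerSeries.mk (hermiteCoeff m (α - γ)))
      (p := (X + C (α - γ)) ^ m)
      (by push_cast; exact mk_hermiteCoeff_mul_X_add_C_pow hm (sub_ne_zero.mpr hαγ)) M)
  rw [map_sub, map_mul, map_one, map_pow, map_pow, aeval_X, aeval_def,
    PowerSeries.eval₂_trunc_eq_sum_range, map_add, aeval_X, aeval_C, algebraMap_eq, map_sub,
    sub_add_sub_cancel] at h
  simpa only [PowerSeries.coeff_mk] using h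

theorem eq_of_X_sub_C_pow_dvd_sub {α γ : F} (hαγ : α ≠ γ) {a b : ℕ} {f g : F[X]}
    (hf : f.degree < ↑(a + b)) (hg : g.degree < ↑(a + b))
    (hα : (X - C α) ^ a ∣ f - g) (hγ : (X - C γ) ^ b ∣ f - g) : f = g := by
  have hcop : IsCoprime ((X - C α) ^ a) ((X - C γ) ^ b) :=
    (isCoprime_X_sub_C_of_isUnit_sub (sub_ne_zero.mpr hαγ).isUnit).pow
  refine sub_eq_zero.mp (eq_zero_of_dvd_of_degree_lt (hcop.mul_dvd hα hγ) ?_)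
  rw [degree_mul, degree_pow, degree_pow, degree_X_sub_C, degree_X_sub_C, nsmul_one, nsmul_one,
    ← Nat.cast_add]
  exact (degree_sub_le f g).trans_lt (max_lt hf hg)

/-- The polynomial `L_{1,k}` for the nodes `α` and `γ` of multiplicities `a` and `b`. -/
noncomputable def hermiteBasis (α γ : F) (a b k : ℕ) : F[X] :=
  ∑ i ∈ range (a - k), C (hermiteCoeff b (α - γ) i) * ((X - C α) ^ (i + k) * (X - C γ) ^ b)

section hermiteBasis

variable {α γ : F} {a b k : ℕ}

theorem degree_hermiteBasis_lt : (hermiteBasis α γ a b k).degree < ↑(a + b) := by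
  refine (degree_sum_le _ _).trans_lt ((Finset.sup_lt_iff (WithBot.bot_lt_coe _)).mpr ?_)
  intro i hi
  have hi : i + k + b < a + b := by have := mem_range.mp hi; omega
  calc (C (hermiteCoeff b (α - γ) i) * ((X - C α) ^ (i + k) * (X - C γ) ^ b)).degree
      ≤ ((X - C α) ^ (i + k) * (X - C γ) ^ b).degree := by
        rw [← smul_eq_C_mul]; exact degree_smul_le _ _
    _ = ((i + k + b : ℕ) : WithBot ℕ) := by
      rw [degree_mul, degree_pow, degree_pow, degree_X_sub_C, degree_X_sub_C, nsmul_one,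
        nsmul_one, ← Nat.cast_add]
    _ < ((a + b : ℕ) : WithBot ℕ) := by exact_mod_cast hi

theorem X_sub_C_pow_dvd_hermiteBasis : (X - C γ) ^ b ∣ hermiteBasis α γ a b k :=
  dvd_sum fun _ _ ↦ (dvd_mul_left _ _).mul_left _

theorem X_sub_C_pow_dvd_hermiteBasis_sub (hαγ : α ≠ γ) (hb : 0 < b) (hk : k ≤ a) :
    (X - C α) ^ a ∣ hermiteBasis α γ a b k - (X - C α) ^ k := by
  have hfac : hermiteBasis α γ a b k - (X - C α) ^ k = (X - C α) ^ k *
      ((∑ i ∈ range (a - k), C (hermiteCoeff b (α - γ) i) * (X - C α) ^ i) * (X - C γ) ^ b - 1) := by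
    rw [hermiteBasis, mul_sub, mul_one, sum_mul, mul_sum]
    refine congrArg (· - _) (sum_congr rfl fun i _ ↦ ?_)
    ring
  have h := mul_dvd_mul_left ((X - C α) ^ k)
    (X_sub_C_pow_dvd_sum_hermiteCoeff_mul_sub_one hb hαγ (a - k))
  rwa [← pow_add, Nat.add_sub_cancel' hk, ← hfac] at h

theorem eq_hermiteBasis [CharZero F] (hαγ : α ≠ γ) (hb : 0 < b) (hk : k ≤ a) {L : F[X]}
    (hdeg : L.degree < ↑(a + b))
    (hα : ∀ l < a, (derivative^[l] L).eval α = if l = k then (l.factorial : F) else 0)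
    (hγ : ∀ l < b, (derivative^[l] L).eval γ = 0) :
    L = hermiteBasis α γ a b k := by
  refine eq_of_X_sub_C_pow_dvd_sub hαγ hdeg degree_hermiteBasis_lt ?_
    (dvd_sub (X_sub_C_pow_dvd_of_iterate_derivative_eval_eq_zero hγ) X_sub_C_pow_dvd_hermiteBasis)
  have hLα : (X - C α) ^ a ∣ L - (X - C α) ^ k :=
    X_sub_C_pow_dvd_of_iterate_derivative_eval_eq_zero fun l hl ↦ by
      rw [iterate_derivative_sub, eval_sub, hα l hl, eval_iterate_derivative_X_sub_C_pow_self,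
        sub_self]
  rw [← sub_sub_sub_cancel_right L _ ((X - C α) ^ k)]
  exact dvd_sub hLα (X_sub_C_pow_dvd_hermiteBasis_sub hαγ hb hk)

end hermiteBasis

end

/-- For `P(x) = (x-α₁)^{m₁}(x-α₂)^{m₂}` with `α₁ ≠ α₂`, the
Hermite interpolation polynomials are given explicitly by
`L_{1,k₁} = ∑_{i=0}^{m₁-k₁-1} (-1)^i C(m₂+i-1,m₂-1)/(α₁-α₂)^{m₂+i} (x-α₁)^{i+k₁}(x-α₂)^{m₂}`
and symmetrically for `L_{2,k₂}`. -/
theorem stmt10 {F : Type*} [Field F] [CharZero F] (α₁ α₂ : F) (hne : α₁ ≠ α₂)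
    (m₁ m₂ : ℕ) (hm₁ : 0 < m₁) (hm₂ : 0 < m₂) (n : ℕ) (hn : n = m₁ + m₂)
    (L₁ L₂ : ℕ → F[X])
    (hdeg₁ : ∀ k < m₁, (L₁ k).degree < n)
    (hdeg₂ : ∀ k < m₂, (L₂ k).degree < n)
    (hL₁₁ : ∀ k < m₁, ∀ l < m₁,
      (Polynomial.derivative^[l] (L₁ k)).eval α₁ = if l = k then (l.factorial : F) else 0)
    (hL₁₂ : ∀ k < m₁, ∀ l < m₂, (Polynomial.derivative^[l] (L₁ k)).eval α₂ = 0)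
    (hL₂₂ : ∀ k < m₂, ∀ l < m₂,
      (Polynomial.derivative^[l] (L₂ k)).eval α₂ = if l = k then (l.factorial : F) else 0)
    (hL₂₁ : ∀ k < m₂, ∀ l < m₁, (Polynomial.derivative^[l] (L₂ k)).eval α₁ = 0) :
    (∀ k₁ < m₁, L₁ k₁ = ∑ i ∈ Finset.range (m₁ - k₁),
        C ((-1 : F) ^ i * ((m₂ + i - 1).choose (m₂ - 1) : F) / (α₁ - α₂) ^ (m₂ + i)) *
          ((X - C α₁) ^ (i + k₁) * (X - C α₂) ^ m₂)) ∧
    (∀ k₂ < m₂, L₂ k₂ = ∑ i ∈ Finset.range (m₂ - k₂),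
        C ((-1 : F) ^ i * ((m₁ + i - 1).choose (m₁ - 1) : F) / (α₂ - α₁) ^ (m₁ + i)) *
          ((X - C α₁) ^ m₁ * (X - C α₂) ^ (i + k₂))) := by
  subst hn
  refine ⟨fun k hk ↦ eq_hermiteBasis hne hm₂ hk.le (hdeg₁ k hk) (hL₁₁ k hk) (hL₁₂ k hk),
    fun k hk ↦ ?_⟩
  rw [eq_hermiteBasis hne.symm hm₁ hk.le (add_comm m₁ m₂ ▸ hdeg₂ k hk) (hL₂₂ k hk) (hL₂₁ k hk)]
  exact sum_congr rfl fun i _ ↦ by rw [mul_comm ((X - C α₂) ^ _)]; rfl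
end
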